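/- Let f_{2k,α} be as above, and let α_{2k} = 1 − 2^{2k}/((2k+1)·C(2k,k)). Then: (i) f_{2k,α}(y) = −f_{2k,α}(1−y) for all y; (ii) if α > α_{2k}, then f'_{2k,α}(y) < 0 for all y ∈ [0,1], and consequently there exists c(2k,α) > 0 such that f_{2k,α}(y) − f_{2k,α}(y') ≤ −c(2k,α)(y−y') whenever 0 ≤ y' ≤ y ≤ 1. -/

import Mathlib

/-!
Let `P(y) = ∑_{r > k} C(2k,r) y^r (1-y)^(2k-r)` be the probability that a `Binomial(2k, y)`
variable exceeds `k`. The sum in `f_{2k,α}` is `(1-y) P(y) - y P(1-y)`, which is visibly odd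
under `y ↦ 1 - y`. The derivative of a Bernstein tail telescopes to a single Bernstein
polynomial, and `P(y) + P(1-y) = 1 - C(2k,k) (y(1-y))^k` by the partition of unity; together
they give `f' = -1 + (1-α)(2k+1) C(2k,k) (y(1-y))^k`. Since `y(1-y) ≤ 1/4`, above the threshold
`f' ≤ -c < 0` on `[0,1]`, and the mean value theorem gives the linear contraction.
-/

open Finset

/-- The limiting drift function of the `2k`-choices dynamics with node failures
on the complete graph, with failure probability `α`. -/
noncomputable def f2k (k : ℕ) (α y : ℝ) : ℝ :=
  (α/2) * (1-2*y) + (1-α) * ∑ r ∈ Finset.Icc (k+1) (2*k),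
    (Nat.choose (2*k) r : ℝ) * (y^r * (1-y)^(2*k-r+1) - (1-y)^r * y^(2*k-r+1))

open Polynomial

section Bernstein

variable (R : Type*) [CommRing R]

noncomputable def bernsteinTail (n m : ℕ) : R[X] :=
  ∑ ν ∈ Ioc m n, bernsteinPolynomial R n ν

variable {R}

theorem derivative_bernsteinTail {n m : ℕ} (h : m ≤ n + 1) :
    derivative (bernsteinTail R (n + 1) m) = (n + 1 : R[X]) * bernsteinPolynomial R n m := by
  rw [bernsteinTail, derivative_sum, ← Ico_add_one_add_one_eq_Ioc, ← map_add_right_Ico, sum_map]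
  simp only [addRightEmbedding_apply, bernsteinPolynomial.derivative_succ_aux, ← mul_sum]
  have htel := sum_Ico_sub (bernsteinPolynomial R n) h
  rw [bernsteinPolynomial.eq_zero_of_lt R n.lt_add_one, zero_sub] at htel
  rw [← neg_neg (bernsteinPolynomial R n m), ← htel, ← sum_neg_distrib]
  simp only [neg_sub]

theorem bernsteinTail_add_comp_one_sub (m : ℕ) :
    bernsteinTail R (2 * m) m + (bernsteinTail R (2 * m) m).comp (1 - X) =
      1 - bernsteinPolynomial R (2 * m) m := by
  have hflip : (bernsteinTail R (2 * m) m).comp (1 - X) =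
      ∑ ν ∈ range m, bernsteinPolynomial R (2 * m) ν := by
    rw [bernsteinTail, Polynomial.sum_comp]
    refine sum_nbij' (2 * m - ·) (2 * m - ·) ?_ ?_ ?_ ?_ fun ν hν => ?_
    iterate 4 intro ν hν; simp only [mem_Ioc, mem_range] at hν ⊢; omega
    exact bernsteinPolynomial.flip R _ _ (mem_Ioc.1 hν).2
  rw [hflip, bernsteinTail, ← Ico_add_one_add_one_eq_Ioc, ← bernsteinPolynomial.sum R (2 * m),
    ← sum_range_add_sum_Ico _ (by omega : m + 1 ≤ 2 * m + 1), sum_range_succ]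
  abel

theorem one_sub_X_mul_derivative_bernsteinTail_add_X_mul_comp (k : ℕ) :
    (1 - X) * derivative (bernsteinTail R (2 * k) k) +
        X * (derivative (bernsteinTail R (2 * k) k)).comp (1 - X) =
      (2 * k * (2 * k).choose k : R[X]) * (X * (1 - X)) ^ k := by
  rcases k with _ | j
  · simp [bernsteinTail]
  have hn : 2 * (j + 1) = 2 * j + 1 + 1 := by omega
  rw [hn, derivative_bernsteinTail (by omega), mul_comp, bernsteinPolynomial.flip R _ _ (by omega)]
  simp only [bernsteinPolynomial, show 2 * j + 1 - (j + 1) = j by omega,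
    show 2 * j + 1 - j = j + 1 by omega, Nat.choose_succ_succ' (2 * j + 1) j,
    Nat.choose_symm_half, add_comp, natCast_comp, one_comp, mul_pow]
  push_cast
  ring

variable (R) in
noncomputable def majorityDriftPoly (k : ℕ) : R[X] :=
  (1 - X) * bernsteinTail R (2 * k) k - X * (bernsteinTail R (2 * k) k).comp (1 - X)

theorem majorityDriftPoly_comp_one_sub (k : ℕ) :
    (majorityDriftPoly R k).comp (1 - X) = -majorityDriftPoly R k := by
  simp only [majorityDriftPoly, sub_comp, mul_comp, one_comp, X_comp, comp_assoc, sub_sub_cancel,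
    comp_X]
  ring

theorem derivative_majorityDriftPoly (k : ℕ) :
    derivative (majorityDriftPoly R k) =
      ((2 * k + 1) * (2 * k).choose k : R[X]) * (X * (1 - X)) ^ k - 1 := by
  have hsym := bernsteinTail_add_comp_one_sub (R := R) k
  have hder := one_sub_X_mul_derivative_bernsteinTail_add_X_mul_comp (R := R) k
  rw [bernsteinPolynomial, show 2 * k - k = k by omega, mul_assoc, ← mul_pow] at hsym
  simp only [majorityDriftPoly, derivative_sub, derivative_mul, derivative_comp, derivative_one,
    derivative_X]
  linear_combination hder - hsym

end Bernstein

theorem f2k_eq_eval (k : ℕ) (α y : ℝ) :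
    f2k k α y = α / 2 * (1 - 2 * y) + (1 - α) * (majorityDriftPoly ℝ k).eval y := by
  simp only [f2k, majorityDriftPoly, bernsteinTail, bernsteinPolynomial, eval_sub, eval_mul,
    eval_comp, eval_finsetSum, eval_pow, eval_one, eval_X, eval_natCast, sub_sub_cancel, mul_sum,
    ← sum_sub_distrib, Icc_add_one_left_eq_Ioc]
  congr 1
  refine sum_congr rfl fun r _ => ?_
  ring

theorem f2k_one_sub (k : ℕ) (α y : ℝ) : f2k k α (1 - y) = -f2k k α y := by
  have hflip := congrArg (eval y) (majorityDriftPoly_comp_one_sub (R := ℝ) k)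
  rw [eval_comp, eval_sub, eval_one, eval_X, eval_neg] at hflip
  rw [f2k_eq_eval, f2k_eq_eval, hflip]
  ring

theorem hasDerivAt_f2k (k : ℕ) (α y : ℝ) :
    HasDerivAt (f2k k α)
      (-1 + (1 - α) * ((2 * k + 1) * (2 * k).choose k * (y * (1 - y)) ^ k)) y := by
  have hlin : HasDerivAt (fun y : ℝ => α / 2 * (1 - 2 * y)) (-α) y := by
    simpa using (((hasDerivAt_id y).const_mul 2).const_sub 1).const_mul (α / 2)
  have hpoly := (majorityDriftPoly ℝ k).hasDerivAt y
  rw [derivative_majorityDriftPoly] at hpoly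
  rw [show f2k k α = _ from funext (f2k_eq_eval k α)]
  refine (hlin.add (hpoly.const_mul (1 - α))).congr_deriv ?_
  simp only [eval_sub, eval_mul, eval_pow, eval_add, eval_one, eval_X, eval_natCast, eval_ofNat]
  ring

theorem deriv_f2k_le (k : ℕ) {α y : ℝ} (hα : α ≤ 1) (hy : y ∈ Set.Icc (0 : ℝ) 1) :
    deriv (f2k k α) y ≤ -1 + (1 - α) * ((2 * k + 1) * (2 * k).choose k) / 2 ^ (2 * k) := by
  have hy4 : (y * (1 - y)) ^ k ≤ 1 / 2 ^ (2 * k) := by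
    rw [pow_mul, ← one_div_pow]
    exact pow_le_pow_left₀ (mul_nonneg hy.1 (by linarith [hy.2]))
      (by nlinarith [sq_nonneg (y - 1 / 2)]) k
  rw [(hasDerivAt_f2k k α y).deriv, mul_div_assoc, div_eq_mul_one_div _ (2 ^ (2 * k) : ℝ)]
  gcongr

theorem stmt_19_general (k : ℕ) (α : ℝ) (hα : α ∈ Set.Ioo (0:ℝ) 1)
    (α2k : ℝ)
    (hα2k : α2k = 1 - 2^(2*k) / ((2*(k:ℝ)+1) * (Nat.choose (2*k) k : ℝ))) :
    (∀ y : ℝ, f2k k α y = - f2k k α (1-y)) ∧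
    (α2k < α →
      (∀ y ∈ Set.Icc (0:ℝ) 1, deriv (f2k k α) y < 0) ∧
      ∃ c : ℝ, 0 < c ∧ ∀ y' y : ℝ, 0 ≤ y' → y' ≤ y → y ≤ 1 →
        f2k k α y - f2k k α y' ≤ -c * (y - y')) := by
  refine ⟨fun y => by rw [f2k_one_sub, neg_neg], fun hlt => ?_⟩
  set M : ℝ := (2 * k + 1) * (2 * k).choose k
  have hM : 0 < M := by
    have := Nat.choose_pos (Nat.le_mul_of_pos_left k two_pos)
    positivity
  set c := 1 - (1 - α) * M / 2 ^ (2 * k)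
  have hc : 0 < c := by
    rw [hα2k, sub_lt_comm, lt_div_iff₀ hM] at hlt
    rw [sub_pos, div_lt_one (by positivity)]
    exact hlt
  have hderiv : ∀ y ∈ Set.Icc (0 : ℝ) 1, deriv (f2k k α) y ≤ -c := fun y hy => by
    linarith [deriv_f2k_le k hα.2.le hy]
  have hdiff : Differentiable ℝ (f2k k α) := fun y => (hasDerivAt_f2k k α y).differentiableAt
  refine ⟨fun y hy => by linarith [hderiv y hy], c, hc, fun y' y hy' hle hy => ?_⟩
  exact (convex_Icc 0 1).image_sub_le_mul_sub_of_deriv_le hdiff.continuous.continuousOn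
    hdiff.differentiableOn (fun x hx => hderiv x (interior_subset hx)) y' ⟨hy', hle.trans hy⟩ y
    ⟨hy'.trans hle, hy⟩ hle

/-- **Properties of the `2k`-choices drift function.**
(i) antisymmetry about `1/2`; (ii) above the threshold
`α_{2k} = 1 − 2^{2k}/((2k+1) C(2k,k))`, the derivative of `f_{2k,α}` is negative
on `[0,1]`, and hence `f_{2k,α}` contracts at a uniform linear rate. -/
theorem stmt_19 (k : ℕ) (hk : 1 ≤ k) (α : ℝ) (hα : α ∈ Set.Ioo (0:ℝ) 1)
    (α2k : ℝ)
    (hα2k : α2k = 1 - 2^(2*k) / ((2*(k:ℝ)+1) * (Nat.choose (2*k) k : ℝ))) :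
    (∀ y : ℝ, f2k k α y = - f2k k α (1-y)) ∧
    (α2k < α →
      (∀ y ∈ Set.Icc (0:ℝ) 1, deriv (f2k k α) y < 0) ∧
      ∃ c : ℝ, 0 < c ∧ ∀ y' y : ℝ, 0 ≤ y' → y' ≤ y → y ≤ 1 →
        f2k k α y - f2k k α y' ≤ -c * (y - y')) :=
  stmt_19_general k α hα α2k hα2k
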